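/- arXiv:2510.02959 — 6 statements merged into one kernel-verified Lean document; each statement's English description precedes it below -/
import Mathlib

section
/- With B, k, w and the mutation maps μ_k^±, E_k^± as in the context, and with ⟪u,v⟫ = Σ_{b∈B} u(b)·v(b) the standard pairing on ℤ[B], for each choice of sign and all u, v ∈ ℤ[B] one has ⟪E_k^±(u), v⟫ = ⟪u, μ_k^±(v)⟫; that is, E_k^± is the adjoint (transpose) of μ_k^± with respect to the standard pairing. (Lemma 4.8 of the paper.) -/
/-- The tropical mutation map `μ_k^±`, determined on the standard basis by
`e_b ↦ e_b + u b • e_k` for `b ≠ k` and `e_k ↦ -e_k`, where `u b = [w b]₊` (resp. `[w b]₋`). -/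
noncomputable def mutL {B : Type*} [Fintype B] [DecidableEq B] (k : B) (u : B → ℤ) :
    (B →₀ ℤ) →ₗ[ℤ] (B →₀ ℤ) :=
  Finsupp.linearCombination ℤ
    (fun b => if b = k then -(Finsupp.single k 1)
              else Finsupp.single b 1 + u b • Finsupp.single k 1)

/-- The dual mutation map `E_k^±`, determined on the standard basis by `e_b ↦ e_b` for `b ≠ k`
and `e_k ↦ wp − e_k`, where `wp = [w]₊` (resp. `[w]₋`). -/
noncomputable def mutE {B : Type*} [Fintype B] [DecidableEq B] (k : B) (wp : B →₀ ℤ) :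
    (B →₀ ℤ) →ₗ[ℤ] (B →₀ ℤ) :=
  Finsupp.linearCombination ℤ
    (fun b => if b = k then wp - Finsupp.single k 1 else Finsupp.single b 1)

/-- Pointwise positive part `[w]₊` of `w : B →₀ ℤ`. -/
noncomputable def fPos {B : Type*} (w : B →₀ ℤ) : B →₀ ℤ :=
  Finsupp.mapRange (fun n => max n 0) (by simp) w

/-- Pointwise negative part `[w]₋` of `w : B →₀ ℤ`. -/
noncomputable def fNeg {B : Type*} (w : B →₀ ℤ) : B →₀ ℤ :=
  Finsupp.mapRange (fun n => max (-n) 0) (by simp) w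

/-- The standard pairing `⟪u,v⟫ = Σ_b u(b)·v(b)` on `ℤ[B]`. -/
def pairB {B : Type*} [Fintype B] (u v : B →₀ ℤ) : ℤ := ∑ b : B, u b * v b

/-- The bilinear extension `⟨x,y⟩_M = Σ_{b,c} x(b)·M(b,c)·y(c)` of a matrix `M`. -/
def formM {B : Type*} [Fintype B] (M : B → B → ℤ) (x y : B →₀ ℤ) : ℤ :=
  ∑ b : B, ∑ c : B, x b * M b c * y c

lemma lc_apply {B : Type*} [Fintype B] [DecidableEq B] (f : B → (B →₀ ℤ)) (u : B →₀ ℤ) (x : B) :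
    Finsupp.linearCombination ℤ f u x = ∑ i : B, u i * f i x := by
  rw [Finsupp.linearCombination_apply, Finsupp.sum_apply, Finsupp.sum_fintype]
  · simp
  · intro i; simp
lemma key {B : Type*} [Fintype B] [DecidableEq B] (k : B) (wp : B →₀ ℤ) (h : wp k = 0)
    (u v : B →₀ ℤ) : pairB (mutE k wp u) v = pairB u (mutL k (fun b => wp b) v) := by
  simp only [pairB, mutE, mutL, lc_apply]
  simp only [Finset.sum_mul, Finset.mul_sum]
  rw [Finset.sum_comm]
  apply Finset.sum_congr rfl
  intro i _
  by_cases hi : i = k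
  · subst hi
    simp only [if_pos, Finsupp.sub_apply, Finsupp.single_apply, Finsupp.neg_apply,
      Finsupp.add_apply, Finsupp.smul_apply, smul_eq_mul,
      apply_ite (fun g : B →₀ ℤ => g i), mul_ite, ite_mul, mul_sub,
      sub_mul, Finset.sum_sub_distrib, Finset.sum_ite_eq, Finset.sum_ite_eq', Finset.mem_univ,
      if_true, mul_one, mul_zero, zero_mul, mul_neg, neg_mul, sub_zero]
    have key : ∀ x : B, (if x = i then -(u i * v x)
        else u i * (v x * ((if x = i then (1:ℤ) else 0) + wp x)))
        = u i * wp x * v x + (if x = i then -(u i * v i) else 0) := by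
      intro x
      by_cases hx : x = i
      · subst hx; simp [h]
      · simp [hx]; ring
    rw [Finset.sum_congr rfl fun x _ => key x, Finset.sum_add_distrib]
    simp [sub_eq_add_neg]
  · simp only [if_neg hi, Finsupp.add_apply, Finsupp.single_apply, Finsupp.smul_apply,
      smul_eq_mul, Finsupp.neg_apply, apply_ite (fun g : B →₀ ℤ => g i), mul_ite, ite_mul,
      mul_zero, zero_mul, mul_one,
      if_neg (Ne.symm hi), hi, if_false, add_zero, Finset.sum_ite_eq, Finset.sum_ite_eq',
      Finset.mem_univ, if_true]
    rw [Finset.sum_eq_single i]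
    · simp [hi]
    · intro b _ hb; simp [hb]
    · simp

/-- Lemma 4.8: `E_k^±` is the adjoint of `μ_k^±` with respect to the
standard pairing: `⟪E_k^±(u), v⟫ = ⟪u, μ_k^±(v)⟫` for all `u, v ∈ ℤ[B]`. -/
theorem mutE_adjoint_mutL {B : Type*} [Fintype B] [DecidableEq B] (k : B) (w : B →₀ ℤ)
    (hw : w k = 0) :
    (∀ u v : B →₀ ℤ, pairB (mutE k (fPos w) u) v = pairB u (mutL k (fun b => max (w b) 0) v)) ∧
    (∀ u v : B →₀ ℤ, pairB (mutE k (fNeg w) u) v = pairB u (mutL k (fun b => max (-(w b)) 0) v)) := by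
  constructor
  · intro u v
    have h1 : (fun b => max (w b) 0) = fun b => (fPos w) b := by
      funext b; simp [fPos, Finsupp.mapRange_apply]
    rw [h1]
    exact key k (fPos w) (by simp [fPos, Finsupp.mapRange_apply, hw]) u v
  · intro u v
    have h1 : (fun b => max (-(w b)) 0) = fun b => (fNeg w) b := by
      funext b; simp [fNeg, Finsupp.mapRange_apply]
    rw [h1]
    exact key k (fNeg w) (by simp [fNeg, Finsupp.mapRange_apply, hw]) u v
end

section
/- Let B be a finite type with decidable equality, k ∈ B, and M : B → B → ℤ a matrix with M(k,k) = 0. Let w ∈ ℤ[B] be the k-th row, w(c) = M(k,c), and let μ_k^+ be the plus tropical mutation map built from w. Define the mutated form by μ_kM(x,y) := ⟨μ_k^+(x), μ_k^+(y)⟩_M. Then for all b, c ∈ B: μ_kM(e_b, e_c) = M(b,c) + [M(k,b)]₊·M(k,c) + [M(k,c)]₊·M(b,k) if b ≠ k and c ≠ k; μ_kM(e_b, e_k) = −M(b,k) if b ≠ k; μ_kM(e_k, e_c) = −M(k,c) if c ≠ k; and μ_kM(e_k, e_k) = 0. In particular the k-th row of the mutated form is the negative of the k-th row of M. (Lemma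 4.11 of the paper; when M(b,k) = −M(k,b) this is the Fomin–Zelevinsky matrix mutation rule.) -/
/-- The plus tropical mutation map at `k` built from the `k`-th row `w = M(k,−)` of a matrix. -/
noncomputable def muPlusRow {B : Type*} [Fintype B] [DecidableEq B] (k : B) (M : B → B → ℤ) :
    (B →₀ ℤ) →ₗ[ℤ] (B →₀ ℤ) :=
  mutL k (fun j => max (M k j) 0)

/-- The mutated form `μ_kM(x,y) := ⟨μ_k^+(x), μ_k^+(y)⟩_M`. -/
noncomputable def mutForm {B : Type*} [Fintype B] [DecidableEq B] (k : B) (M : B → B → ℤ)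
    (x y : B →₀ ℤ) : ℤ :=
  formM M (muPlusRow k M x) (muPlusRow k M y)


lemma formM_gen {B : Type*} [Fintype B] [DecidableEq B] (M : B → B → ℤ)
    (b c k : B) (s t : ℤ) (hb : b ≠ k) (hc : c ≠ k) :
    formM M (Finsupp.single b 1 + s • Finsupp.single k 1)
      (Finsupp.single c 1 + t • Finsupp.single k 1)
      = M b c + t * M b k + s * M k c + s * t * M k k := by
  simp only [formM, Finsupp.add_apply, Finsupp.smul_apply, Finsupp.single_apply, smul_eq_mul,
    add_mul, mul_add, ite_mul, mul_ite, one_mul, mul_one, zero_mul, mul_zero,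
    Finset.sum_add_distrib, Finset.sum_ite_eq', Finset.mem_univ, if_true]
  simp [hb, hc, Finsupp.single_apply, Finset.sum_add_distrib, Finset.sum_ite_eq]
  ring

lemma formM_genk {B : Type*} [Fintype B] [DecidableEq B] (M : B → B → ℤ)
    (b k : B) (s t : ℤ) (hb : b ≠ k) :
    formM M (Finsupp.single b 1 + s • Finsupp.single k 1) (t • Finsupp.single k 1)
      = t * M b k + s * t * M k k := by
  simp only [formM, Finsupp.add_apply, Finsupp.smul_apply, Finsupp.single_apply, smul_eq_mul,
    add_mul, mul_add, ite_mul, mul_ite, one_mul, mul_one, zero_mul, mul_zero,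
    Finset.sum_add_distrib, Finset.sum_ite_eq', Finset.mem_univ, if_true]
  simp [hb, Finsupp.single_apply, Finset.sum_add_distrib, Finset.sum_ite_eq]
  ring

lemma formM_kgen {B : Type*} [Fintype B] [DecidableEq B] (M : B → B → ℤ)
    (c k : B) (s t : ℤ) (hc : c ≠ k) :
    formM M (s • Finsupp.single k 1) (Finsupp.single c 1 + t • Finsupp.single k 1)
      = s * M k c + s * t * M k k := by
  simp only [formM, Finsupp.add_apply, Finsupp.smul_apply, Finsupp.single_apply, smul_eq_mul,
    add_mul, mul_add, ite_mul, mul_ite, one_mul, mul_one, zero_mul, mul_zero,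
    Finset.sum_add_distrib, Finset.sum_ite_eq', Finset.mem_univ, if_true]
  simp [hc, Finsupp.single_apply, Finset.sum_add_distrib, Finset.sum_ite_eq]
  ring

lemma formM_kk {B : Type*} [Fintype B] [DecidableEq B] (M : B → B → ℤ)
    (k : B) (s t : ℤ) :
    formM M (s • Finsupp.single k 1) (t • Finsupp.single k 1) = s * t * M k k := by
  simp only [formM, Finsupp.smul_apply, Finsupp.single_apply, smul_eq_mul,
    ite_mul, mul_ite, one_mul, mul_one, zero_mul, mul_zero,
    Finset.sum_ite_eq', Finset.mem_univ, if_true]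
  simp [Finset.sum_ite_eq]
  ring

lemma muPlusRow_single {B : Type*} [Fintype B] [DecidableEq B] (k : B) (M : B → B → ℤ)
    (b : B) : muPlusRow k M (Finsupp.single b 1) =
      if b = k then -(Finsupp.single k 1)
      else Finsupp.single b 1 + max (M k b) 0 • Finsupp.single k 1 := by
  simp [muPlusRow, mutL, Finsupp.linearCombination_single]

/-- Lemma 4.11: explicit values of the mutated form `μ_kM` on basis
vectors; in particular the `k`-th row of the mutated form is the negative of that of `M`. -/
theorem mutForm_values {B : Type*} [Fintype B] [DecidableEq B] (k : B) (M : B → B → ℤ)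
    (hMkk : M k k = 0) :
    (∀ b c : B, b ≠ k → c ≠ k →
      mutForm k M (Finsupp.single b 1) (Finsupp.single c 1)
        = M b c + max (M k b) 0 * M k c + max (M k c) 0 * M b k) ∧
    (∀ b : B, b ≠ k → mutForm k M (Finsupp.single b 1) (Finsupp.single k 1) = -(M b k)) ∧
    (∀ c : B, c ≠ k → mutForm k M (Finsupp.single k 1) (Finsupp.single c 1) = -(M k c)) ∧
    mutForm k M (Finsupp.single k 1) (Finsupp.single k 1) = 0 := by
  have hk : muPlusRow k M (Finsupp.single k 1) = (-1 : ℤ) • Finsupp.single k 1 := by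
    rw [muPlusRow_single]; simp
  refine ⟨fun b c hb hc => ?_, fun b hb => ?_, fun c hc => ?_, ?_⟩
  · rw [mutForm, muPlusRow_single, muPlusRow_single, if_neg hb, if_neg hc,
      formM_gen M b c k _ _ hb hc, hMkk]; ring
  · rw [mutForm, muPlusRow_single, if_neg hb, hk, formM_genk M b k _ _ hb, hMkk]; ring
  · rw [mutForm, hk, muPlusRow_single, if_neg hc, formM_kgen M c k _ _ hc, hMkk]; ring
  · rw [mutForm, hk, formM_kk, hMkk]; ring
end

section
/- Let B be a finite type with decidable equality, k ∈ B, ex a subset of B containing k, and M : B → B → ℤ a matrix with M(k,k) = 0 and M(b,k) = −M(k,b) for all b ∈ ex. Let μ_k^+ and μ_k^− be the tropical mutation maps built from the row w := M(k,−). Then the mutated form is independent of the sign used to define it: for all b ∈ ex and all c ∈ B, ⟨μ_k^+(e_b), μ_k^+(e_c)⟩_M = ⟨μ_k^−(e_b), μ_k^−(e_c)⟩_M. (Lemma 4.14 of the paper, sign invariance of form mutation.) -/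
/-- Lemma 4.14, sign invariance of form mutation: if `M(k,k) = 0` and
`M(b,k) = −M(k,b)` for all `b ∈ ex`, then the mutated form is independent of the sign:
`⟨μ_k^+(e_b), μ_k^+(e_c)⟩_M = ⟨μ_k^−(e_b), μ_k^−(e_c)⟩_M` for all `b ∈ ex`, `c ∈ B`. -/
theorem mutForm_sign_invariance {B : Type*} [Fintype B] [DecidableEq B] (k : B)
    (ex : Set B) (hk : k ∈ ex) (M : B → B → ℤ) (hMkk : M k k = 0)
    (hskew : ∀ b ∈ ex, M b k = -(M k b)) :
    ∀ b ∈ ex, ∀ c : B,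
      formM M (mutL k (fun j => max (M k j) 0) (Finsupp.single b 1))
              (mutL k (fun j => max (M k j) 0) (Finsupp.single c 1))
        = formM M (mutL k (fun j => max (-(M k j)) 0) (Finsupp.single b 1))
                  (mutL k (fun j => max (-(M k j)) 0) (Finsupp.single c 1)) := by

  classical
  have hmut : ∀ (u : B → ℤ) (b : B), mutL k u (Finsupp.single b 1) =
      if b = k then -(Finsupp.single k 1)
      else Finsupp.single b 1 + u b • Finsupp.single k 1 := by
    intro u b
    simp [mutL, Finsupp.linearCombination_single]
  have hform : ∀ (x y : B →₀ ℤ), formM M x y = formM M x y := fun _ _ => rfl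
  -- formM of singles
  have hss : ∀ (b c : B), formM M (Finsupp.single b 1) (Finsupp.single c 1) = M b c := by
    intro b c
    simp [formM, Finsupp.single_apply, Finset.mul_sum]
  have hadd1 : ∀ (x x' y : B →₀ ℤ), formM M (x + x') y = formM M x y + formM M x' y := by
    intro x x' y
    simp [formM, add_mul, Finset.sum_add_distrib]
  have hadd2 : ∀ (x y y' : B →₀ ℤ), formM M x (y + y') = formM M x y + formM M x y' := by
    intro x y y'
    simp [formM, mul_add, Finset.sum_add_distrib]
  have hsmul1 : ∀ (n : ℤ) (x y : B →₀ ℤ), formM M (n • x) y = n * formM M x y := by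
    intro n x y
    simp [formM, Finset.mul_sum, mul_assoc, mul_left_comm]
  have hsmul2 : ∀ (n : ℤ) (x y : B →₀ ℤ), formM M x (n • y) = n * formM M x y := by
    intro n x y
    simp [formM, Finset.mul_sum]
    congr 1; ext b; congr 1; ext c; ring
  have hneg1 : ∀ (x y : B →₀ ℤ), formM M (-x) y = -formM M x y := by
    intro x y; simp [formM, Finset.sum_neg_distrib]
  have hneg2 : ∀ (x y : B →₀ ℤ), formM M x (-y) = -formM M x y := by
    intro x y; simp [formM]
  intro b hb c
  rw [hmut, hmut, hmut, hmut]
  by_cases hbk : b = k <;> by_cases hck : c = k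
  · rw [if_pos hbk, if_pos hck, if_pos hbk, if_pos hck]
  · rw [if_pos hbk, if_neg hck, if_pos hbk, if_neg hck]
    simp only [hneg1, hneg2, hadd1, hadd2, hsmul1, hsmul2, hss, hbk, hMkk]
    ring
  · rw [if_neg hbk, if_pos hck, if_neg hbk, if_pos hck]
    simp only [hneg1, hneg2, hadd1, hadd2, hsmul1, hsmul2, hss, hck, hMkk]
    ring
  · rw [if_neg hbk, if_neg hck, if_neg hbk, if_neg hck]
    simp only [hneg1, hneg2, hadd1, hadd2, hsmul1, hsmul2, hss, hMkk]
    have h := hskew b hb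
    have e1 : max (M k c) 0 = M k c + max (-(M k c)) 0 := by omega
    have e2 : max (M k b) 0 = M k b + max (-(M k b)) 0 := by omega
    rw [h, e1, e2]; ring
end

section
/- Let B be a finite type with decidable equality, k ∈ B, ex a subset of B containing k, and M : B → B → ℤ a matrix with M(k,k) = 0 and M(b,k) = −M(k,b) for all b ∈ ex. Let μ_k^+ be the plus tropical mutation map built from the row w := M(k,−), let μ_kM(x,y) := ⟨μ_k^+(x), μ_k^+(y)⟩_M be the mutated form, and let ν_k^+ be the plus tropical mutation map built from the k-th row of the mutated form, c ↦ μ_kM(e_k, e_c) (which equals −M(k,−)). Then mutating again at the (canonically identified) index k returns the original form: for all b ∈ ex and all c ∈ B, μ_kM(ν_k^+(e_b), ν_k^+(e_c)) = M(b,c). (Proposition 4.15 of the paper: mutation of the form ⟨-,-⟩_β is involutive up to the canonical relabelling ν.) -/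
/-- The plus tropical mutation map at (the canonically relabelled) `k` built from the `k`-th
row of the mutated form, `c ↦ μ_kM(e_k, e_c)` (which equals `−M(k,−)`). -/
noncomputable def nuPlusRow {B : Type*} [Fintype B] [DecidableEq B] (k : B) (M : B → B → ℤ) :
    (B →₀ ℤ) →ₗ[ℤ] (B →₀ ℤ) :=
  mutL k (fun c => max (mutForm k M (Finsupp.single k 1) (Finsupp.single c 1)) 0)

section Aux

variable {B : Type*} [Fintype B] [DecidableEq B]

lemma mutL_single (k : B) (u : B → ℤ) (b : B) :
    mutL k u (Finsupp.single b 1) =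
      if b = k then -(Finsupp.single k 1)
      else Finsupp.single b 1 + u b • Finsupp.single k 1 := by
  simp [mutL]

lemma formM_single (M : B → B → ℤ) (b c : B) :
    formM M (Finsupp.single b 1) (Finsupp.single c 1) = M b c := by
  simp [formM, Finsupp.single_apply, ite_mul, mul_ite]

lemma formM_add_left (M : B → B → ℤ) (x x' y : B →₀ ℤ) :
    formM M (x + x') y = formM M x y + formM M x' y := by
  simp [formM, add_mul, Finset.sum_add_distrib]

lemma formM_add_right (M : B → B → ℤ) (x y y' : B →₀ ℤ) :
    formM M x (y + y') = formM M x y + formM M x y' := by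
  simp [formM, mul_add, Finset.sum_add_distrib]

lemma formM_smul_left (M : B → B → ℤ) (n : ℤ) (x y : B →₀ ℤ) :
    formM M (n • x) y = n * formM M x y := by
  simp [formM, Finset.mul_sum, mul_assoc]

lemma formM_smul_right (M : B → B → ℤ) (n : ℤ) (x y : B →₀ ℤ) :
    formM M x (n • y) = n * formM M x y := by
  simp only [formM, Finset.mul_sum, Finsupp.smul_apply, smul_eq_mul]
  congr 1; ext b; congr 1; ext c; ring

lemma formM_neg_left (M : B → B → ℤ) (x y : B →₀ ℤ) :
    formM M (-x) y = -formM M x y := by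
  have := formM_smul_left M (-1) x y
  simpa using this

lemma formM_neg_right (M : B → B → ℤ) (x y : B →₀ ℤ) :
    formM M x (-y) = -formM M x y := by
  have := formM_smul_right M (-1) x y
  simpa using this

lemma mutForm_k_single (k : B) (M : B → B → ℤ) (hMkk : M k k = 0) (c : B) :
    mutForm k M (Finsupp.single k 1) (Finsupp.single c 1) = -(M k c) := by
  unfold mutForm muPlusRow
  rw [mutL_single, mutL_single, if_pos rfl]
  by_cases hc : c = k
  · subst hc
    rw [if_pos rfl, formM_neg_left, formM_neg_right, formM_single, hMkk]
    ring
  · rw [if_neg hc, formM_neg_left, formM_add_right, formM_smul_right,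
      formM_single, formM_single, hMkk]
    ring

lemma munu_single (k : B) (M : B → B → ℤ) (hMkk : M k k = 0) (b : B) :
    muPlusRow k M (nuPlusRow k M (Finsupp.single b 1)) =
      if b = k then Finsupp.single k 1
      else Finsupp.single b 1 + M k b • Finsupp.single k 1 := by
  unfold nuPlusRow
  rw [mutL_single]
  by_cases hb : b = k
  · subst hb
    rw [if_pos rfl, if_pos rfl, map_neg]
    unfold muPlusRow
    rw [mutL_single, if_pos rfl, neg_neg]
  · rw [if_neg hb, if_neg hb, map_add, map_smul]
    unfold muPlusRow
    rw [mutL_single, mutL_single, if_neg hb, if_pos rfl]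
    rw [mutForm_k_single k M hMkk b]
    have h : (max (-(M k b)) 0 : ℤ) = max (M k b) 0 - M k b := by omega
    rw [h]
    module

end Aux

/-- Proposition 4.15: mutation of the form `⟨-,-⟩_β` is involutive up to
the canonical relabelling: mutating the mutated form again at `k`, using the mutated exchange
row, returns the original form: `μ_kM(ν_k^+(e_b), ν_k^+(e_c)) = M(b,c)` for `b ∈ ex`, `c ∈ B`. -/
theorem mutForm_involutive {B : Type*} [Fintype B] [DecidableEq B] (k : B)
    (ex : Set B) (hk : k ∈ ex) (M : B → B → ℤ) (hMkk : M k k = 0)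
    (hskew : ∀ b ∈ ex, M b k = -(M k b)) :
    ∀ b ∈ ex, ∀ c : B,
      mutForm k M (nuPlusRow k M (Finsupp.single b 1)) (nuPlusRow k M (Finsupp.single c 1))
        = M b c := by
  intro b hb c
  unfold mutForm
  rw [munu_single k M hMkk b, munu_single k M hMkk c]
  split_ifs with h1 h2 h3
  · subst h1; subst h2; rw [formM_single]
  · subst h1
    simp only [formM_add_right, formM_smul_right, formM_single, hMkk]
    ring
  · subst h3
    simp only [formM_add_left, formM_smul_left, formM_single, hMkk, hskew b hb]
    ring
  · simp only [formM_add_left, formM_add_right, formM_smul_left, formM_smul_right,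
      formM_single, hMkk, hskew b hb]
    ring
end

section
/- Let B be a finite type with decidable equality, k ∈ B, L : B → B → ℤ a skew-symmetric matrix (L(b,c) = −L(c,b) for all b, c), and w ∈ ℤ[B] with w(k) = 0 satisfying the compatibility condition Σ_{c∈B} L(b,c)·w(c) = 1 if b = k and = 0 if b ≠ k. Let E_k^+ and E_k^− be the dual mutation maps built from w. Then the two pullbacks of the bilinear extension of L agree: ⟨E_k^+(u), E_k^+(v)⟩_L = ⟨E_k^−(u), E_k^−(v)⟩_L for all u, v ∈ ℤ[B]. (Lemma 4.19 of the paper, sign invariance of the mutation of the quasi-commutation form λ.) -/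
/-! The difference `E_k^+ - E_k^-` is `u ↦ u(k) • w`, since `[w]₊ - [w]₋ = w`. Compatibility says
`⟨x, w⟩_L = x(k)`, skew-symmetry then gives `⟨w, x⟩_L = -x(k)`, and `E_k^-` negates the `k`-th
coordinate because `[w]₋(k) = 0`. Expanding `⟨E^-u + u(k) w, E^-v + v(k) w⟩_L` bilinearly, the three correction terms
are `-u(k)·(-v(k))`, `v(k)·(-u(k))` and `u(k)v(k)·w(k) = 0`, which cancel. -/

theorem fPos_eq_fNeg_add {B : Type*} (w : B →₀ ℤ) : fPos w = fNeg w + w := by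
  ext b
  simp only [fPos, fNeg, Finsupp.mapRange_apply, Finsupp.add_apply]
  omega

theorem fNeg_apply_eq_zero {B : Type*} {w : B →₀ ℤ} {k : B} (hw : w k = 0) : fNeg w k = 0 := by
  simp [fNeg, hw]

section mutE

variable {B : Type*} [Fintype B] [DecidableEq B] (k : B) (wp : B →₀ ℤ)

theorem mutE_eq :
    mutE k wp = LinearMap.id + (Finsupp.lapply k).smulRight (wp - 2 • Finsupp.single k 1) := by
  refine Finsupp.lhom_ext fun b n => ?_
  rcases eq_or_ne b k with rfl | hne
  · simp only [mutE, Finsupp.linearCombination_single, ↓reduceIte, LinearMap.add_apply,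
      LinearMap.id_apply, LinearMap.smulRight_apply, Finsupp.lapply_apply, Finsupp.single_eq_same]
    rw [← Finsupp.smul_single_one b n]
    module
  · simp [mutE, hne]

theorem mutE_apply (u : B →₀ ℤ) : mutE k wp u = u + u k • (wp - 2 • Finsupp.single k 1) := by
  simp [mutE_eq]

theorem mutE_add_right (d u : B →₀ ℤ) : mutE k (wp + d) u = mutE k wp u + u k • d := by
  simp only [mutE_apply, smul_sub, smul_add]
  abel

theorem mutE_apply_self (u : B →₀ ℤ) : mutE k wp u k = u k * (wp k - 1) := by
  rw [mutE_apply, Finsupp.add_apply, Finsupp.smul_apply, Finsupp.sub_apply, Finsupp.smul_apply,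
    Finsupp.single_eq_same, smul_eq_mul]
  ring

end mutE

section formM

variable {B : Type*} [Fintype B] (M : B → B → ℤ)

theorem formM_add_smul (x y w : B →₀ ℤ) (a b : ℤ) :
    formM M (x + a • w) (y + b • w)
      = formM M x y + a * formM M w y + b * formM M x w + a * b * formM M w w := by
  simp only [formM, Finsupp.add_apply, Finsupp.smul_apply, smul_eq_mul, Finset.mul_sum,
    ← Finset.sum_add_distrib]
  exact Finset.sum_congr rfl fun _ _ => Finset.sum_congr rfl fun _ _ => by ring

theorem formM_swap_of_skew (hM : ∀ b c, M b c = -M c b) (x y : B →₀ ℤ) :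
    formM M y x = -formM M x y := by
  rw [formM, formM, Finset.sum_comm, ← Finset.sum_neg_distrib]
  refine Finset.sum_congr rfl fun b _ => ?_
  rw [← Finset.sum_neg_distrib]
  exact Finset.sum_congr rfl fun c _ => by rw [hM]; ring

theorem formM_eq_sum_mul_sum (x y : B →₀ ℤ) :
    formM M x y = ∑ b, x b * ∑ c, M b c * y c := by
  simp only [formM, Finset.mul_sum, mul_assoc]

variable [DecidableEq B] {k : B} {w : B →₀ ℤ}

theorem formM_right_eq_apply_of_compat (hcompat : ∀ b, ∑ c, M b c * w c = if b = k then 1 else 0)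
    (x : B →₀ ℤ) : formM M x w = x k := by
  simp [formM_eq_sum_mul_sum, hcompat]

end formM

/-- Lemma 4.19, sign invariance of the mutation of `λ`: for `L`
skew-symmetric and `w` compatible with `L` (`Σ_c L(b,c)·w(c) = δ_{bk}`), the two pullbacks of
`⟨-,-⟩_L` along `E_k^+` and `E_k^−` agree. -/
theorem lambdaForm_sign_invariance {B : Type*} [Fintype B] [DecidableEq B] (k : B)
    (L : B → B → ℤ) (hLskew : ∀ b c : B, L b c = -(L c b))
    (w : B →₀ ℤ) (hw : w k = 0)
    (hcompat : ∀ b : B, (∑ c : B, L b c * w c) = if b = k then 1 else 0) :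
    ∀ u v : B →₀ ℤ,
      formM L (mutE k (fPos w) u) (mutE k (fPos w) v)
        = formM L (mutE k (fNeg w) u) (mutE k (fNeg w) v) := by
  have hright := formM_right_eq_apply_of_compat L hcompat
  have hleft (x : B →₀ ℤ) : formM L w x = -x k := by
    rw [formM_swap_of_skew L hLskew, hright]
  have hsplit (x : B →₀ ℤ) : mutE k (fPos w) x = mutE k (fNeg w) x + x k • w := by
    rw [fPos_eq_fNeg_add, mutE_add_right]
  intro u v
  rw [hsplit u, hsplit v, formM_add_smul, hright, hright, hleft, mutE_apply_self,
    mutE_apply_self, fNeg_apply_eq_zero hw, hw]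
  ring
end

section
/- Let B be a finite type with decidable equality, ex a subset of B, and k ∈ ex. Let β : ℤ[B] → ℤ[B] and Λ : ℤ[B] → ℤ[B] be ℤ-linear maps (β(e_j) for j ∈ ex encodes the exchange datum β(j) in dual-basis coordinates, and Λ encodes the quasi-commutation datum λ). Suppose they are compatible: ⟪β(e_j), Λ(e_b)⟫ = 1 if j = b and = 0 otherwise, for all j ∈ ex and all b ∈ B, where ⟪u,v⟫ = Σ_{b∈B} u(b)·v(b). Set w := β(e_k) and assume w(k) = 0. Let μ_k^+ and E_k^+ be the plus tropical and dual mutation maps built from w, and define the mutated data β' := E_k^+ ∘ β ∘ μ_k^+ and Λ' := μ_k^+ ∘ Λ ∘ E_k^+. Then β' and Λ' are again compatible: ⟪β'(e_j), Λ'(e_b)⟫ = 1 if j = b and = 0 otherwise, for all j ∈ ex and all b ∈ B. (Lemma 4.18 of the paper: the mutated maps μ_kβ and μ_kλ are compatible.) -/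
/-! With `[w]₊(k) = 0`, the maps `E_k^+` and `μ_k^+` are adjoint inverses for `⟪·,·⟫`:
`⟪E x, μ y⟫ = ⟪x, y⟫`. Compatibility extends by bilinearity to `⟪β x, Λ v⟫ = ⟪x, v⟫` for every
`x` supported on `ex`, and `μ(e_j)` is supported on `{j, k} ⊆ ex`. Hence
`⟪E β μ e_j, μ Λ E e_b⟫ = ⟪β μ e_j, Λ E e_b⟫ = ⟪μ e_j, E e_b⟫ = ⟪e_b, e_j⟫ = δ_{jb}`. -/

open Finsupp

section Pairing

variable {B : Type*} [Fintype B]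

theorem pairB_eq_dotProduct (u v : B →₀ ℤ) : pairB u v = ⇑u ⬝ᵥ ⇑v := rfl

noncomputable def pairBₗ : (B →₀ ℤ) →ₗ[ℤ] (B →₀ ℤ) →ₗ[ℤ] ℤ :=
  (dotProductBilin ℤ ℤ).compl₁₂ lcoeFun lcoeFun

theorem pairBₗ_apply (u v : B →₀ ℤ) : pairBₗ u v = pairB u v := rfl

theorem pairB_comm (u v : B →₀ ℤ) : pairB u v = pairB v u :=
  dotProduct_comm _ _

variable [DecidableEq B]

@[simp]
theorem pairBₗ_single_right (u : B →₀ ℤ) (b : B) (n : ℤ) :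
    pairBₗ u (single b n) = u b * n := by
  rw [pairBₗ_apply, pairB_eq_dotProduct, single_eq_pi_single, dotProduct_single]

@[simp]
theorem pairBₗ_single_left (v : B →₀ ℤ) (b : B) (n : ℤ) :
    pairBₗ (single b n) v = n * v b := by
  rw [pairBₗ_apply, pairB_comm, ← pairBₗ_apply, pairBₗ_single_right, mul_comm]

end Pairing

section Mutation

variable {B : Type*} [Fintype B] [DecidableEq B]

theorem mutL_single_one (k : B) (u : B → ℤ) (a : B) :
    mutL k u (single a 1) = if a = k then -single k 1 else single a 1 + u a • single k 1 := by
  simp [mutL]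

theorem mutE_single_one (k : B) (wp : B →₀ ℤ) (a : B) :
    mutE k wp (single a 1) = if a = k then wp - single k 1 else single a 1 := by
  simp [mutE]

theorem mutL_single_one_mem_supported {s : Set B} {k j : B} (hk : k ∈ s) (hj : j ∈ s)
    (u : B → ℤ) : mutL k u (single j 1) ∈ supported ℤ ℤ s := by
  rw [mutL_single_one]
  split_ifs
  · exact Submodule.neg_mem _ (single_mem_supported ℤ _ hk)
  · exact Submodule.add_mem _ (single_mem_supported ℤ _ hj)
      (Submodule.smul_mem _ _ (single_mem_supported ℤ _ hk))

theorem pairB_mutE_mutL (k : B) (wp : B →₀ ℤ) (hwp : wp k = 0) (x y : B →₀ ℤ) :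
    pairB (mutE k wp x) (mutL k wp y) = pairB x y := by
  suffices pairBₗ.compl₁₂ (mutE k wp) (mutL k wp) = pairBₗ from
    LinearMap.congr_fun₂ this x y
  ext a b
  simp only [LinearMap.comp_apply, lsingle_apply, LinearMap.compl₁₂_apply, mutE_single_one,
    mutL_single_one]
  by_cases ha : a = k <;> by_cases hb : b = k <;> simp [ha, hb, hwp, single_apply, eq_comm]

end Mutation

section Compatibility

variable {B : Type*} [Fintype B] [DecidableEq B]

def Compatible (ex : Set B) (β Λ : (B →₀ ℤ) →ₗ[ℤ] (B →₀ ℤ)) : Prop :=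
  ∀ j ∈ ex, ∀ b : B, pairB (β (single j 1)) (Λ (single b 1)) = if j = b then 1 else 0

variable {ex : Set B} {β Λ : (B →₀ ℤ) →ₗ[ℤ] (B →₀ ℤ)}

theorem Compatible.pairB_map_map (h : Compatible ex β Λ) {x : B →₀ ℤ}
    (hx : x ∈ supported ℤ ℤ ex) (v : B →₀ ℤ) : pairB (β x) (Λ v) = pairB x v := by
  suffices pairBₗ.compl₁₂ β Λ x = pairBₗ x from LinearMap.congr_fun this v
  rw [supported_eq_span_single] at hx
  induction hx using Submodule.span_induction with
  | mem y hy =>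
    obtain ⟨j, hj, rfl⟩ := hy
    ext b
    have hjb := h j hj b
    rw [← pairBₗ_apply] at hjb
    simpa [single_apply] using hjb
  | zero => simp
  | add y z _ _ hy hz => simp [hy, hz]
  | smul n y _ hy => simp [hy]

theorem Compatible.mutation (h : Compatible ex β Λ) {k : B} (hk : k ∈ ex) {wp : B →₀ ℤ}
    (hwp : wp k = 0) :
    Compatible ex (mutE k wp ∘ₗ β ∘ₗ mutL k wp) (mutL k wp ∘ₗ Λ ∘ₗ mutE k wp) := by
  intro j hj b
  calc pairB (mutE k wp (β (mutL k wp (single j 1)))) (mutL k wp (Λ (mutE k wp (single b 1))))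
      = pairB (β (mutL k wp (single j 1))) (Λ (mutE k wp (single b 1))) :=
        pairB_mutE_mutL k wp hwp _ _
    _ = pairB (mutL k wp (single j 1)) (mutE k wp (single b 1)) :=
        h.pairB_map_map (mutL_single_one_mem_supported hk hj _) _
    _ = pairB (mutE k wp (single b 1)) (mutL k wp (single j 1)) := pairB_comm _ _
    _ = pairB (single b 1) (single j 1) := pairB_mutE_mutL k wp hwp _ _
    _ = if j = b then 1 else 0 := by simp [← pairBₗ_apply, single_apply, eq_comm]

end Compatibility

theorem mutated_beta_lambda_compatible_general {B : Type*} [Fintype B] [DecidableEq B]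
    (ex : Set B) (k : B) (hk : k ∈ ex)
    (β Λ : (B →₀ ℤ) →ₗ[ℤ] (B →₀ ℤ))
    (hcompat : ∀ j ∈ ex, ∀ b : B,
      pairB (β (Finsupp.single j 1)) (Λ (Finsupp.single b 1)) = if j = b then 1 else 0)
    (w : B →₀ ℤ) (hw : w k = 0) :
    ∀ j ∈ ex, ∀ b : B,
      pairB (mutE k (fPos w) (β (mutL k (fun c => max (w c) 0) (Finsupp.single j 1))))
            (mutL k (fun c => max (w c) 0) (Λ (mutE k (fPos w) (Finsupp.single b 1))))
        = if j = b then 1 else 0 :=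
  -- `⇑(fPos w)` is definitionally `fun c => max (w c) 0`.
  Compatible.mutation hcompat hk (wp := fPos w) (by simp [fPos, hw])

/-- Lemma 4.18: if `β` and `Λ` are compatible
(`⟪β(e_j), Λ(e_b)⟫ = δ_{jb}` for `j ∈ ex`, `b ∈ B`), `k ∈ ex`, and `w := β(e_k)` satisfies
`w(k) = 0`, then the mutated data `β' := E_k^+ ∘ β ∘ μ_k^+` and `Λ' := μ_k^+ ∘ Λ ∘ E_k^+`
are again compatible. -/
theorem mutated_beta_lambda_compatible {B : Type*} [Fintype B] [DecidableEq B]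
    (ex : Set B) (k : B) (hk : k ∈ ex)
    (β Λ : (B →₀ ℤ) →ₗ[ℤ] (B →₀ ℤ))
    (hcompat : ∀ j ∈ ex, ∀ b : B,
      pairB (β (Finsupp.single j 1)) (Λ (Finsupp.single b 1)) = if j = b then 1 else 0)
    (w : B →₀ ℤ) (hwdef : w = β (Finsupp.single k 1)) (hw : w k = 0) :
    ∀ j ∈ ex, ∀ b : B,
      pairB (mutE k (fPos w) (β (mutL k (fun c => max (w c) 0) (Finsupp.single j 1))))
            (mutL k (fun c => max (w c) 0) (Λ (mutE k (fPos w) (Finsupp.single b 1))))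
        = if j = b then 1 else 0 :=
  mutated_beta_lambda_compatible_general ex k hk β Λ hcompat w hw
end
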